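/- Let B be a nonempty set, f₁, f₂, g : B → ω with f₁(b) ≤ f₂(b) for all b ∈ B. For i = 1, 2 define the partial function 𝒰ᵢ(m) = max{fᵢ(b) : b ∈ B, g(b) ≤ m}, defined exactly when {fᵢ(b) : g(b) ≤ m} is nonempty and bounded above. Then typ(𝒰₁) ⪯ typ(𝒰₂) with respect to the linear order α ≺ β ≺ γ ≺ δ ≺ ε. -/

import Mathlib

def domPlus (D : Set ℕ) (g : ℕ → ℕ) : Set ℕ := {n ∈ D | n ≤ g n}

def domMinus (D : Set ℕ) (g : ℕ → ℕ) : Set ℕ := {n ∈ D | g n ≤ n}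

def bddOn (D : Set ℕ) (g : ℕ → ℕ) : Prop := ∃ C, ∀ n ∈ D, g n ≤ C

inductive Typ where
  | A | B | C | D | E
deriving DecidableEq

def typIs (D : Set ℕ) (g : ℕ → ℕ) : Typ → Prop
  | .A => D.Infinite ∧ bddOn D g
  | .B => D.Infinite ∧ (domPlus D g).Finite ∧ ¬ bddOn D g
  | .C => (domPlus D g).Infinite ∧ (domMinus D g).Infinite
  | .D => D.Infinite ∧ (domMinus D g).Finite
  | .E => D.Finite

/-- Position in the linear order α ≺ β ≺ γ ≺ δ ≺ ε. -/
def Typ.ord : Typ → ℕ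
  | .A => 0
  | .B => 1
  | .C => 2
  | .D => 3
  | .E => 4

/-!
If `𝒰₂` has infinite domain, then `𝒰₁` has the same domain: a bound for `f₂` on `{g ≤ m'}`
bounds `f₁` on `{g ≤ m}` for every `m ≤ m'`. There `𝒰₁ ≤ 𝒰₂`, and on a fixed infinite domain
`typ h ⪰ β`, `typ h ⪰ γ`, `typ h ⪰ δ` say that `h` is unbounded, that `h n ≥ n` infinitely often,
and that `h n ≤ n` only finitely often; each of these survives increasing `h`.
If `𝒰₂` has finite domain, its type is `ε`, the top of the order.
-/

open Set

section FixedDomain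

variable {D : Set ℕ} {v v₁ v₂ : ℕ → ℕ} {t t₁ t₂ : Typ}

theorem Typ.ord_le_four (t : Typ) : t.ord ≤ 4 := by
  cases t <;> decide

theorem domPlus_finite_of_bddOn (h : bddOn D v) : (domPlus D v).Finite := by
  obtain ⟨C, hC⟩ := h
  exact (finite_Iic C).subset fun n hn => hn.2.trans (hC n hn.1)

theorem domPlus_union_domMinus (D : Set ℕ) (v : ℕ → ℕ) : domPlus D v ∪ domMinus D v = D := by
  ext n
  simp only [domPlus, domMinus, mem_union, mem_sep_iff, ← and_or_left, le_total, and_true]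

theorem domPlus_infinite_of_domMinus_finite (hD : D.Infinite) (h : (domMinus D v).Finite) :
    (domPlus D v).Infinite := fun hP => hD (domPlus_union_domMinus D v ▸ hP.union h)

theorem domMinus_infinite_of_domPlus_finite (hD : D.Infinite) (h : (domPlus D v).Finite) :
    (domMinus D v).Infinite := fun hM => hD (domPlus_union_domMinus D v ▸ h.union hM)

theorem typIs.ord_eq_four_iff (h : typIs D v t) : t.ord = 4 ↔ D.Finite := by
  cases t
  case E => exact iff_of_true rfl h
  case C => exact iff_of_false (by decide) (h.1.mono (sep_subset D _))
  all_goals exact iff_of_false (by decide) h.1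

theorem typIs.one_le_ord_iff (h : typIs D v t) (hD : D.Infinite) :
    1 ≤ t.ord ↔ ¬ bddOn D v := by
  cases t
  case A => exact iff_of_false (by decide) (not_not.2 h.2)
  case B => exact iff_of_true (by decide) h.2.2
  case C => exact iff_of_true (by decide) fun hb => h.1 (domPlus_finite_of_bddOn hb)
  case D =>
    exact iff_of_true (by decide) fun hb =>
      domPlus_infinite_of_domMinus_finite hD h.2 (domPlus_finite_of_bddOn hb)
  case E => exact absurd h hD

theorem typIs.two_le_ord_iff (h : typIs D v t) (hD : D.Infinite) :
    2 ≤ t.ord ↔ (domPlus D v).Infinite := by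
  cases t
  case A => exact iff_of_false (by decide) (not_not.2 (domPlus_finite_of_bddOn h.2))
  case B => exact iff_of_false (by decide) (not_not.2 h.2.1)
  case C => exact iff_of_true (by decide) h.1
  case D => exact iff_of_true (by decide) (domPlus_infinite_of_domMinus_finite hD h.2)
  case E => exact absurd h hD

theorem typIs.three_le_ord_iff (h : typIs D v t) (hD : D.Infinite) :
    3 ≤ t.ord ↔ (domMinus D v).Finite := by
  cases t
  case A =>
    exact iff_of_false (by decide)
      (domMinus_infinite_of_domPlus_finite hD (domPlus_finite_of_bddOn h.2))
  case B => exact iff_of_false (by decide) (domMinus_infinite_of_domPlus_finite hD h.2.1)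
  case C => exact iff_of_false (by decide) h.2
  case D => exact iff_of_true (by decide) h.2
  case E => exact absurd h hD

theorem bddOn_of_le (hle : ∀ n ∈ D, v₁ n ≤ v₂ n) (h : bddOn D v₂) : bddOn D v₁ := by
  obtain ⟨C, hC⟩ := h
  exact ⟨C, fun n hn => (hle n hn).trans (hC n hn)⟩

theorem domPlus_subset_of_le (hle : ∀ n ∈ D, v₁ n ≤ v₂ n) : domPlus D v₁ ⊆ domPlus D v₂ :=
  fun n hn => ⟨hn.1, hn.2.trans (hle n hn.1)⟩

theorem domMinus_subset_of_le (hle : ∀ n ∈ D, v₁ n ≤ v₂ n) : domMinus D v₂ ⊆ domMinus D v₁ :=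
  fun n hn => ⟨hn.1, (hle n hn.1).trans hn.2⟩

theorem Typ.ord_le_of_le (hle : ∀ n ∈ D, v₁ n ≤ v₂ n) (h₁ : typIs D v₁ t₁)
    (h₂ : typIs D v₂ t₂) : t₁.ord ≤ t₂.ord := by
  rcases D.finite_or_infinite with hD | hD
  · rw [h₁.ord_eq_four_iff.2 hD, h₂.ord_eq_four_iff.2 hD]
  have h₁_ne_four : t₁.ord ≠ 4 := fun h => hD (h₁.ord_eq_four_iff.1 h)
  have one_le : 1 ≤ t₁.ord → 1 ≤ t₂.ord := fun h =>
    (h₂.one_le_ord_iff hD).2 fun hb => (h₁.one_le_ord_iff hD).1 h (bddOn_of_le hle hb)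
  have two_le : 2 ≤ t₁.ord → 2 ≤ t₂.ord := fun h =>
    (h₂.two_le_ord_iff hD).2 (((h₁.two_le_ord_iff hD).1 h).mono (domPlus_subset_of_le hle))
  have three_le : 3 ≤ t₁.ord → 3 ≤ t₂.ord := fun h =>
    (h₂.three_le_ord_iff hD).2
      (((h₁.three_le_ord_iff hD).1 h).subset (domMinus_subset_of_le hle))
  have := t₁.ord_le_four
  omega

end FixedDomain

section SupOfSublevel

variable {B : Type*} (f : B → ℕ) (g : B → ℕ)

/-- The domain of `𝒰 m = max (f '' {b | g b ≤ m})`. -/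
def supDom : Set ℕ := {m | (∃ b, g b ≤ m) ∧ BddAbove (f '' {b | g b ≤ m})}

variable {f g}

theorem supDom_subset : supDom f g ⊆ {m | ∃ b, g b ≤ m} := fun _ hm => hm.1

theorem supDom_eq_of_infinite (h : (supDom f g).Infinite) : supDom f g = {m | ∃ b, g b ≤ m} := by
  refine supDom_subset.antisymm fun m hm => ⟨hm, ?_⟩
  obtain ⟨m', hm', hmm'⟩ := h.exists_gt m
  exact hm'.2.mono (image_mono fun b hb => le_trans hb hmm'.le)

variable {f₁ f₂ : B → ℕ}

theorem supDom_subset_of_le (hle : ∀ b, f₁ b ≤ f₂ b) : supDom f₂ g ⊆ supDom f₁ g := by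
  rintro m ⟨hm, C, hC⟩
  exact ⟨hm, C, forall_mem_image.2 fun b hb => (hle b).trans (hC (mem_image_of_mem f₂ hb))⟩

theorem csSup_image_le_of_le (hle : ∀ b, f₁ b ≤ f₂ b) {s : Set B} (hs : s.Nonempty)
    (hbdd : BddAbove (f₂ '' s)) :
    sSup (f₁ '' s) ≤ sSup (f₂ '' s) :=
  csSup_le (hs.image f₁) <| forall_mem_image.2 fun b hb =>
    (hle b).trans (le_csSup hbdd (mem_image_of_mem f₂ hb))

end SupOfSublevel

theorem stmt9_general {B : Type*} (f₁ f₂ g : B → ℕ)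
    (hle : ∀ b, f₁ b ≤ f₂ b)
    (dom₁ : Set ℕ) (val₁ : ℕ → ℕ) (dom₂ : Set ℕ) (val₂ : ℕ → ℕ)
    (hdom₁ : dom₁ = {m | (∃ b, g b ≤ m) ∧ BddAbove {k | ∃ b, g b ≤ m ∧ f₁ b = k}})
    (hval₁ : ∀ m ∈ dom₁, val₁ m = sSup {k | ∃ b, g b ≤ m ∧ f₁ b = k})
    (hdom₂ : dom₂ = {m | (∃ b, g b ≤ m) ∧ BddAbove {k | ∃ b, g b ≤ m ∧ f₂ b = k}})
    (hval₂ : ∀ m ∈ dom₂, val₂ m = sSup {k | ∃ b, g b ≤ m ∧ f₂ b = k})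
    (t₁ t₂ : Typ) (ht₁ : typIs dom₁ val₁ t₁) (ht₂ : typIs dom₂ val₂ t₂) :
    t₁.ord ≤ t₂.ord := by
  replace hdom₁ : dom₁ = supDom f₁ g := hdom₁
  replace hdom₂ : dom₂ = supDom f₂ g := hdom₂
  rcases dom₂.finite_or_infinite with hfin | hinf
  · rw [ht₂.ord_eq_four_iff.2 hfin]
    exact t₁.ord_le_four
  have hdom : dom₁ = dom₂ := by
    rw [hdom₂] at hinf
    rw [hdom₁, hdom₂]
    exact (supDom_subset.trans (supDom_eq_of_infinite hinf).ge).antisymm (supDom_subset_of_le hle)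
  refine Typ.ord_le_of_le (fun m hm => ?_) (hdom ▸ ht₁) ht₂
  rw [hval₁ m (hdom ▸ hm), hval₂ m hm]
  rw [hdom₂] at hm
  exact csSup_image_le_of_le hle hm.1 hm.2

/-- If `f₁ ≤ f₂` pointwise, then for `𝒰ᵢ(m) = max {fᵢ b : g b ≤ m}` we have
`typ(𝒰₁) ⪯ typ(𝒰₂)`. -/
theorem stmt9 {B : Type*} [Nonempty B] (f₁ f₂ g : B → ℕ)
    (hle : ∀ b, f₁ b ≤ f₂ b)
    (dom₁ : Set ℕ) (val₁ : ℕ → ℕ) (dom₂ : Set ℕ) (val₂ : ℕ → ℕ)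
    (hdom₁ : dom₁ = {m | (∃ b, g b ≤ m) ∧ BddAbove {k | ∃ b, g b ≤ m ∧ f₁ b = k}})
    (hval₁ : ∀ m ∈ dom₁, val₁ m = sSup {k | ∃ b, g b ≤ m ∧ f₁ b = k})
    (hdom₂ : dom₂ = {m | (∃ b, g b ≤ m) ∧ BddAbove {k | ∃ b, g b ≤ m ∧ f₂ b = k}})
    (hval₂ : ∀ m ∈ dom₂, val₂ m = sSup {k | ∃ b, g b ≤ m ∧ f₂ b = k})
    (t₁ t₂ : Typ) (ht₁ : typIs dom₁ val₁ t₁) (ht₂ : typIs dom₂ val₂ t₂) :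
    t₁.ord ≤ t₂.ord :=
  stmt9_general f₁ f₂ g hle dom₁ val₁ dom₂ val₂ hdom₁ hval₁ hdom₂ hval₂ t₁ t₂ ht₁ ht₂
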